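/- arXiv:2502.13068 — 4 statements merged into one kernel-verified Lean document; each statement's English description precedes it below -/
import Mathlib

section
/- Let (a_n) be a sequence in a commutative ring and (b_n) its binomial transform b_n = Σ_{k=0}^n (-1)^{n-k} C(n,k) a_k. Then for every positive integer n, the n×n Hankel matrices H_n(a) = (a_{i+j})_{0≤i,j≤n-1} and H_n(b) = (b_{i+j})_{0≤i,j≤n-1} have equal determinants. -/
/-!
Let `φ` be the moment functional on `R[X]`, the linear map with `φ (X ^ m) = a m`. Then
`a (i + j) = φ (X ^ i * X ^ j)`, while the binomial transform is `b m = φ ((X - 1) ^ m)`, so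
`b (i + j) = φ ((X - 1) ^ i * (X - 1) ^ j)`: both Hankel matrices are Gram matrices of the bilinear
form `(p, q) ↦ φ (p * q)`, in the bases `X ^ i` and `(X - 1) ^ i`. The change of basis `L` is
unitriangular, hence `H(b) = L * H(a) * Lᵀ` and the determinants agree.
-/

open Finset Matrix Polynomial

section

variable {R : Type*} [CommRing R]

def Matrix.hankel (a : ℕ → R) (n : ℕ) : Matrix (Fin n) (Fin n) R :=
  of fun i j => a (i + j)

def binomialTransform (c : R) (a : ℕ → R) (m : ℕ) : R :=
  ∑ k ∈ range (m + 1), c ^ (m - k) * (m.choose k : R) * a k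

lemma Polynomial.natDegree_X_add_C_pow_le (c : R) (m : ℕ) : ((X + C c) ^ m).natDegree ≤ m :=
  (natDegree_pow_le_of_le m (by simpa using natDegree_X_le)).trans_eq (mul_one m)

noncomputable def momentFunctional (a : ℕ → R) : R[X] →ₗ[R] R :=
  lsum fun m => LinearMap.mulRight R (a m)

namespace momentFunctional

lemma apply_monomial (a : ℕ → R) (m : ℕ) (r : R) :
    momentFunctional a (monomial m r) = r * a m := by
  simp [momentFunctional]

lemma apply_eq_sum_range (a : ℕ → R) {p : R[X]} {n : ℕ} (hp : p.natDegree < n) :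
    momentFunctional a p = ∑ k ∈ range n, p.coeff k * a k := by
  rw [momentFunctional, lsum_apply, sum_over_range' _ (by simp) n hp]
  rfl

lemma apply_mul (a : ℕ → R) {p q : R[X]} {n : ℕ} (hp : p.natDegree < n) (hq : q.natDegree < n) :
    momentFunctional a (p * q) = ∑ k ∈ range n, ∑ l ∈ range n, p.coeff k * a (k + l) * q.coeff l := by
  conv_lhs => rw [as_sum_range' p n hp, as_sum_range' q n hq]
  simp only [sum_mul_sum, monomial_mul_monomial, map_sum, apply_monomial]
  exact sum_congr rfl fun k _ => sum_congr rfl fun l _ => by ring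

lemma apply_X_add_C_pow (a : ℕ → R) (c : R) (m : ℕ) :
    momentFunctional a ((X + C c) ^ m) = binomialTransform c a m := by
  simp only [apply_eq_sum_range a (Nat.lt_succ_of_le (natDegree_X_add_C_pow_le c m)),
    coeff_X_add_C_pow, binomialTransform]

end momentFunctional

def Matrix.ofCoeff {n : ℕ} (p : Fin n → R[X]) : Matrix (Fin n) (Fin n) R :=
  of fun i k => (p i).coeff k

lemma Matrix.ofCoeff_mul_hankel_mul_transpose (a : ℕ → R) {n : ℕ} (p : Fin n → R[X])
    (hp : ∀ i, (p i).natDegree < n) :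
    ofCoeff p * hankel a n * (ofCoeff p)ᵀ = of fun i j => momentFunctional a (p i * p j) := by
  ext i j
  rw [of_apply, momentFunctional.apply_mul a (hp i) (hp j), ← Fin.sum_univ_eq_sum_range]
  simp only [← Fin.sum_univ_eq_sum_range (fun l => _ * a (_ + l) * (p j).coeff l), mul_apply, sum_mul,
    ofCoeff, hankel, transpose_apply, of_apply]
  exact sum_comm

lemma Matrix.det_ofCoeff_X_add_C_pow (c : R) (n : ℕ) :
    (ofCoeff fun i : Fin n => (X + C c) ^ (i : ℕ)).det = 1 := by
  rw [det_of_isLowerTriangular]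
  · simp [ofCoeff, coeff_X_add_C_pow]
  · intro i k hik
    simp [ofCoeff, coeff_X_add_C_pow, Nat.choose_eq_zero_of_lt (show (i : ℕ) < k from hik)]

theorem Matrix.det_hankel_binomialTransform (c : R) (a : ℕ → R) (n : ℕ) :
    (hankel (binomialTransform c a) n).det = (hankel a n).det := by
  set L := ofCoeff fun i : Fin n => (X + C c) ^ (i : ℕ)
  have hdeg (i : Fin n) : ((X + C c) ^ (i : ℕ)).natDegree < n :=
    (natDegree_X_add_C_pow_le c i).trans_lt i.isLt
  have hgram : hankel (binomialTransform c a) n = L * hankel a n * Lᵀ := by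
    rw [ofCoeff_mul_hankel_mul_transpose a _ hdeg]
    ext i j
    simp [hankel, ← pow_add, momentFunctional.apply_X_add_C_pow]
  rw [hgram, det_mul, det_mul, det_transpose, det_ofCoeff_X_add_C_pow, one_mul, mul_one]

end

theorem hankel_det_binomial_transform_general {R : Type*} [CommRing R] (a b : ℕ → R)
    (hb : ∀ n, b n = ∑ k ∈ Finset.range (n + 1),
      (-1 : R) ^ (n - k) * (n.choose k : R) * a k)
    (n : ℕ) :
    Matrix.det (fun i j : Fin n => a (i + j)) =
      Matrix.det (fun i j : Fin n => b (i + j)) := by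
  obtain rfl : b = binomialTransform (-1) a := funext hb
  exact (det_hankel_binomialTransform (-1) a n).symm

theorem hankel_det_binomial_transform {R : Type*} [CommRing R] (a b : ℕ → R)
    (hb : ∀ n, b n = ∑ k ∈ Finset.range (n + 1),
      (-1 : R) ^ (n - k) * (n.choose k : R) * a k)
    (n : ℕ) (hn : 0 < n) :
    Matrix.det (fun i j : Fin n => a (i + j)) =
      Matrix.det (fun i j : Fin n => b (i + j)) :=
  hankel_det_binomial_transform_general a b hb n
end

section
/- Let (a_n) be a sequence of integers such that for every n and every prime p, a_{n+p} ≡ a_n (mod p), and let (b_n) be its binomial transform. Then for every n, b_n is divisible by the product of all primes p ≤ n. -/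
/-!
Writing `Δ = S - 1` with `S` the shift operator, the binomial theorem modulo `p` gives
`Δ ^ p ≡ S ^ p - 1 (mod p)` for every prime `p` (for `p = 2` because `1 ≡ -1`). Hence the
hypothesis makes `Δ ^ p a` divisible by `p`, and so is `Δ ^ n a = Δ ^ (n - p) (Δ ^ p a)` for
`p ≤ n`. The binomial transform is `b n = Δ ^ n a 0`, and distinct primes are coprime.
-/

open Finset fwdDiff fwdDiff_aux

lemma Nat.Prime.exists_neg_one_pow_eq {R : Type*} [Ring R] {p : ℕ} (hp : p.Prime) :
    ∃ c : R, (-1) ^ p = -1 + p * c := by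
  rcases hp.eq_two_or_odd' with rfl | hodd
  · exact ⟨1, by norm_num⟩
  · exact ⟨0, by simp [hodd.neg_one_pow]⟩

lemma fwdDiff_iter_prime_eq {M G : Type*} [AddCommMonoid M] [AddCommGroup G] (h : M) {p : ℕ}
    (hp : p.Prime) (f : M → G) :
    ∃ g : M → G, (Δ_[h])^[p] f = (fun y ↦ f (y + p • h) - f y) + p • g := by
  obtain ⟨r, hr⟩ := (Commute.neg_one_right (shiftₗ M G h)).exists_add_pow_prime_eq hp
  obtain ⟨c, hc⟩ := hp.exists_neg_one_pow_eq (R := Module.End ℤ (M → G))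
  refine ⟨c f + (shiftₗ M G h * -1 * r) f, ?_⟩
  have hΔ : fwdDiffₗ M G h = shiftₗ M G h + -1 := by simp [shiftₗ]
  rw [← coe_fwdDiffₗ_pow, hΔ, hr, hc]
  ext y
  simp only [mul_neg, mul_one, neg_mul, mul_assoc, LinearMap.add_apply, LinearMap.neg_apply,
    Module.End.one_apply, Module.End.mul_apply, Module.End.natCast_apply, Pi.add_apply,
    shiftₗ_pow_apply, Pi.neg_apply, Pi.smul_apply, smul_add, smul_neg]
  abel

lemma prime_dvd_fwdDiff_iter {R : Type*} [CommRing R] {a : ℕ → R} {p : ℕ} (hp : p.Prime)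
    (ha : ∀ n, (p : R) ∣ a (n + p) - a n) {n : ℕ} (hpn : p ≤ n) (m : ℕ) :
    (p : R) ∣ (Δ_[1])^[n] a m := by
  choose c hc using ha
  obtain ⟨g, hg⟩ := fwdDiff_iter_prime_eq 1 hp a
  have hpow : (Δ_[1])^[p] a = p • (c + g) := by
    rw [hg, smul_add]
    congr 1
    ext y
    simp [hc, nsmul_eq_mul]
  obtain ⟨j, rfl⟩ := Nat.exists_eq_add_of_le' hpn
  rw [Function.iterate_add_apply, hpow, fwdDiff_iter_const_smul, Pi.smul_apply, nsmul_eq_mul]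
  exact dvd_mul_right _ _

lemma natCast_primorial_dvd_of_forall_prime_dvd {n : ℕ} {x : ℤ}
    (h : ∀ p, p.Prime → p ≤ n → (p : ℤ) ∣ x) : (primorial n : ℤ) ∣ x := by
  rw [Int.natCast_dvd]
  refine prod_primes_dvd _ (fun p hp ↦ (mem_filter.1 hp).2.prime) fun p hp ↦ ?_
  rw [mem_filter, mem_range_succ_iff] at hp
  exact Int.natCast_dvd.1 (h p hp.2 hp.1)

theorem primorial_dvd_binomial_transform (a : ℕ → ℤ)
    (ha : ∀ (n : ℕ) (p : ℕ), p.Prime → (p : ℤ) ∣ a (n + p) - a n) :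
    ∀ n : ℕ, (∏ p ∈ (Finset.range (n + 1)).filter Nat.Prime, (p : ℤ)) ∣
      ∑ k ∈ Finset.range (n + 1), (-1 : ℤ) ^ (n - k) * (n.choose k : ℤ) * a k := by
  intro n
  have htransform : ∑ k ∈ range (n + 1), (-1 : ℤ) ^ (n - k) * (n.choose k : ℤ) * a k
      = (Δ_[1])^[n] a 0 := by
    simp [fwdDiff_iter_eq_sum_shift, mul_assoc]
  rw [htransform, ← Nat.cast_prod]
  exact natCast_primorial_dvd_of_forall_prime_dvd fun p hp hpn ↦
    prime_dvd_fwdDiff_iter hp (fun m ↦ ha m p hp) hpn 0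
end

section
/- Let (a_n) be a primary pseudo-polynomial (integer sequence with a_{n+p} ≡ a_n mod p for all n and primes p). Then for every positive integer n, the determinant of the n-th Hankel matrix H_n = (a_{i+j})_{0≤i,j≤n-1} is divisible by ∏_{p ≤ n-1, p prime} p^{n-p}. -/
/-! For a prime `p < n`, row `i ≥ p` of the Hankel matrix `(a (i + j))` is congruent mod `p` to
row `i - p`. Subtracting from each such row the row `p` places above it is left multiplication by
a unitriangular matrix, so it keeps the determinant, and it leaves `n - p` rows divisible by `p`.
Hence `p ^ (n - p)` divides the determinant, and the powers of distinct primes are coprime. -/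

open Finset

namespace Matrix

variable {R ι : Type*} [CommRing R] [Fintype ι] [DecidableEq ι]

theorem pow_card_dvd_det_of_dvd_rows (A : Matrix ι ι R) (r : R) (s : Finset ι)
    (h : ∀ i ∈ s, ∀ j, r ∣ A i j) : r ^ #s ∣ A.det := by
  choose B hB using h
  set B' : Matrix ι ι R := of fun i j => if hi : i ∈ s then B i hi j else A i j
  have hA : A.det = (∏ i, if i ∈ s then r else 1) * B'.det := by
    rw [← det_mul_column]
    congr 1
    ext i j
    by_cases hi : i ∈ s <;> simp [B', hi, hB]
  rw [hA, prod_ite_mem, univ_inter, prod_const]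
  exact dvd_mul_right _ _

theorem det_sub_rows_of_lt [LinearOrder ι] (M : Matrix ι ι R) (σ : ι → ι) (s : Finset ι)
    (hσ : ∀ i ∈ s, σ i < i) :
    det (of fun i j => if i ∈ s then M i j - M (σ i) j else M i j) = M.det := by
  set N : Matrix ι ι R := of fun i k => if i ∈ s ∧ k = σ i then 1 else 0
  have hL : (1 - N).det = 1 := by
    rw [det_of_isLowerTriangular]
    · refine prod_eq_one fun i _ => ?_
      have hN : N i i = 0 := if_neg fun h => (hσ i h.1).ne' h.2
      simp [hN]
    · intro i k hik
      have hik : i < k := hik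
      have hN : N i k = 0 := if_neg fun (h : i ∈ s ∧ k = σ i) => (hσ i h.1).not_gt (h.2 ▸ hik)
      simp [hN, one_apply_ne hik.ne]
  have hLM : (of fun i j => if i ∈ s then M i j - M (σ i) j else M i j) = (1 - N) * M := by
    ext i j
    by_cases hi : i ∈ s <;> simp [N, hi, mul_apply, sub_mul, one_apply, sum_sub_distrib]
  rw [hLM, det_mul, hL, one_mul]

theorem pow_card_dvd_det_of_dvd_sub_rows [LinearOrder ι] (M : Matrix ι ι R) (r : R)
    (σ : ι → ι) (s : Finset ι) (hσ : ∀ i ∈ s, σ i < i)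
    (h : ∀ i ∈ s, ∀ j, r ∣ M i j - M (σ i) j) : r ^ #s ∣ M.det := by
  rw [← det_sub_rows_of_lt M σ s hσ]
  refine pow_card_dvd_det_of_dvd_rows _ r s fun i hi j => ?_
  simpa [hi] using h i hi j

theorem pow_sub_dvd_det_hankel {a : ℕ → R} {r : R} {m : ℕ} (hm : 0 < m)
    (h : ∀ k, r ∣ a (k + m) - a k) (n : ℕ) :
    r ^ (n - m) ∣ det (of fun i j : Fin n => a (i + j)) := by
  rcases le_or_gt n m with hnm | hmn
  · simp [Nat.sub_eq_zero_of_le hnm]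
  let σ : Fin n → Fin n := fun i => ⟨i - m, (Nat.sub_le _ _).trans_lt i.2⟩
  have hs : #(Ici (⟨m, hmn⟩ : Fin n)) = n - m := Fin.card_Ici _
  have hmem : ∀ i ∈ Ici (⟨m, hmn⟩ : Fin n), m ≤ (i : ℕ) :=
    fun i hi => Fin.le_def.mp (mem_Ici.mp hi)
  rw [← hs]
  refine pow_card_dvd_det_of_dvd_sub_rows _ r σ _ (fun i hi => ?_) fun i hi j => ?_
  · exact Fin.lt_def.mpr (Nat.sub_lt (by have := hmem i hi; omega) hm)
  · have hi := hmem i hi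
    change r ∣ a (i + j) - a (i - m + j)
    rw [show (i + j : ℕ) = i - m + j + m by omega]
    exact h _

end Matrix

theorem hankel_det_divisibility (a : ℕ → ℤ)
    (ha : ∀ (n : ℕ) (p : ℕ), p.Prime → (p : ℤ) ∣ a (n + p) - a n) :
    ∀ n : ℕ, 0 < n →
      (∏ p ∈ (Finset.range n).filter Nat.Prime, (p : ℤ) ^ (n - p)) ∣
        Matrix.det (fun i j : Fin n => a (i + j)) := by
  intro n _
  refine Finset.prod_dvd_of_coprime (fun p hp q hq hpq => ?_) fun p hp => ?_
  · simp only [coe_filter, Set.mem_ofPred_eq] at hp hq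
    exact .pow (Nat.isCoprime_iff_coprime.mpr ((Nat.coprime_primes hp.2 hq.2).mpr hpq))
  · have hp : p.Prime := (mem_filter.mp hp).2
    exact Matrix.pow_sub_dvd_det_hankel hp.pos (fun k => ha k p hp) n
end

section
/- If the generating series f = Σ a_n x^n of an integer sequence satisfies: a_{n+k} ≡ a_n (mod k) for all n, k, and f is a rational function whose denominator is a power of (1−x), then (a_n) is a polynomial sequence, i.e., there exists P ∈ ℚ[x] with a_n = P(n) for all n. -/
/-!
Multiplying the generating series by `(1 - X) ^ m` takes `m` forward differences, so the
coefficient of `X ^ (n + m)` in the polynomial `Q = f * (1 - X) ^ m` is `Δ^[m] a n`; hence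
`Δ^[m] a` vanishes eventually. Forward differences of a pseudo-polynomial are again
pseudo-polynomials, and an eventually vanishing pseudo-polynomial `b` vanishes identically,
since `b n` is divisible by every large `k`. A sequence with `Δ^[m] a = 0` is, by Newton's forward
difference formula, the polynomial `∑_{k < m} Δ^[k] a 0 * (n choose k)`.
-/

open Finset Polynomial fwdDiff

theorem PowerSeries.coeff_mk_mul_one_sub_X_pow {R : Type*} [CommRing R] (a : ℕ → R)
    (m n : ℕ) : coeff (n + m) (mk a * (1 - X) ^ m) = (Δ_[1])^[m] a n := by
  induction m generalizing n with
  | zero => simp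
  | succ m ih =>
    rw [pow_succ, ← mul_assoc, mul_sub, mul_one, map_sub, ← add_assoc, coeff_succ_mul_X,
      add_right_comm, ih, ih, Function.iterate_succ_apply']
    rfl

def IsPseudoPolynomial (a : ℕ → ℤ) : Prop :=
  ∀ n k : ℕ, (k : ℤ) ∣ a (n + k) - a n

namespace IsPseudoPolynomial

variable {a : ℕ → ℤ}

theorem fwdDiff (ha : IsPseudoPolynomial a) : IsPseudoPolynomial (Δ_[1] a) := by
  intro n k
  have hdiff : Δ_[1] a (n + k) - Δ_[1] a n = (a (n + 1 + k) - a (n + 1)) - (a (n + k) - a n) := by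
    simp only [_root_.fwdDiff, add_right_comm n k 1]
    ring
  rw [hdiff]
  exact dvd_sub (ha (n + 1) k) (ha n k)

theorem fwdDiff_iter (ha : IsPseudoPolynomial a) (m : ℕ) :
    IsPseudoPolynomial ((Δ_[1])^[m] a) := by
  induction m with
  | zero => exact ha
  | succ m ih => rw [Function.iterate_succ_apply']; exact ih.fwdDiff

theorem eq_zero_of_eventually_zero (ha : IsPseudoPolynomial a) {N : ℕ}
    (hN : ∀ n, N ≤ n → a n = 0) : a = 0 := by
  funext n
  set k := N + (a n).natAbs + 1
  have hdvd : (k : ℤ) ∣ a n := by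
    simpa [hN (n + k) (by omega)] using ha n k
  refine Int.eq_zero_of_abs_lt_dvd hdvd ?_
  rw [Int.abs_eq_natAbs]
  omega

end IsPseudoPolynomial

theorem fwdDiff_iter_eq_zero_of_le {G : Type*} [AddCommGroup G] {a : ℕ → G} {m k : ℕ}
    (ha : (Δ_[1])^[m] a = 0) (hk : m ≤ k) : (Δ_[1])^[k] a = 0 := by
  obtain ⟨j, rfl⟩ := Nat.exists_eq_add_of_le hk
  rw [add_comm, Function.iterate_add_apply, ha]
  clear hk
  induction j with
  | zero => rfl
  | succ j ih => rw [Function.iterate_succ_apply', ih]; exact fwdDiff_const 1 0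

theorem eq_sum_choose_of_fwdDiff_iter_eq_zero {G : Type*} [AddCommGroup G] {a : ℕ → G} {m : ℕ}
    (ha : (Δ_[1])^[m] a = 0) (n : ℕ) :
    a n = ∑ k ∈ range m, n.choose k • (Δ_[1])^[k] a 0 := by
  have hnewton := shift_eq_sum_fwdDiff_iter 1 a n 0
  rw [zero_add, smul_eq_mul, mul_one] at hnewton
  rw [hnewton]
  have hchoose : ∀ k ∈ range (n + 1 + m), k ∉ range (n + 1) →
      n.choose k • (Δ_[1])^[k] a 0 = 0 := by
    intro k _ hk
    rw [Nat.choose_eq_zero_of_lt (by simpa using hk), zero_smul]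
  have hdiff : ∀ k ∈ range (n + 1 + m), k ∉ range m → n.choose k • (Δ_[1])^[k] a 0 = 0 := by
    intro k _ hk
    rw [fwdDiff_iter_eq_zero_of_le ha (by simpa using hk), Pi.zero_apply, smul_zero]
  exact (sum_subset (range_subset_range.2 (Nat.le_add_right _ _)) hchoose).trans
    (sum_subset (range_subset_range.2 (Nat.le_add_left _ _)) hdiff).symm

theorem Polynomial.eval_natCast_descPochhammer_div_factorial {K : Type*} [Field K] [CharZero K]
    (k n : ℕ) : (C (k.factorial : K)⁻¹ * descPochhammer K k).eval (n : K) = n.choose k := by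
  rw [eval_mul, eval_C, descPochhammer_eval_eq_descFactorial,
    Nat.descFactorial_eq_factorial_mul_choose, Nat.cast_mul, inv_mul_cancel_left₀]
  exact_mod_cast k.factorial_ne_zero

theorem exists_polynomial_of_fwdDiff_iter_eq_zero {K : Type*} [Field K] [CharZero K]
    {a : ℕ → ℤ} {m : ℕ} (ha : (Δ_[1])^[m] a = 0) :
    ∃ P : K[X], ∀ n : ℕ, (a n : K) = P.eval (n : K) := by
  refine ⟨∑ k ∈ range m,
    C (((Δ_[1])^[k] a 0 : ℤ) : K) * (C (k.factorial : K)⁻¹ * descPochhammer K k), fun n => ?_⟩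
  rw [eval_finsetSum, eq_sum_choose_of_fwdDiff_iter_eq_zero ha n, Int.cast_sum]
  refine sum_congr rfl fun k _ => ?_
  rw [eval_mul, eval_C, eval_natCast_descPochhammer_div_factorial, nsmul_eq_mul, Int.cast_mul,
    Int.cast_natCast, mul_comm]

theorem rational_one_sub_X_denominator_implies_polynomial (a : ℕ → ℤ)
    (ha : ∀ n k : ℕ, (k : ℤ) ∣ a (n + k) - a n)
    (hf : ∃ (Q : Polynomial ℤ) (m : ℕ),
      PowerSeries.mk a * (1 - PowerSeries.X) ^ m = (Q : PowerSeries ℤ)) :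
    ∃ P : Polynomial ℚ, ∀ n : ℕ, (a n : ℚ) = P.eval (n : ℚ) := by
  obtain ⟨Q, m, hQ⟩ := hf
  have hdiff_eventually_zero : ∀ n, Q.natDegree + 1 ≤ n → (Δ_[1])^[m] a n = 0 := by
    intro n hn
    rw [← PowerSeries.coeff_mk_mul_one_sub_X_pow, hQ, Polynomial.coeff_coe,
      Polynomial.coeff_eq_zero_of_natDegree_lt (by omega)]
  have hdiff_zero : (Δ_[1])^[m] a = 0 :=
    ((show IsPseudoPolynomial a from ha).fwdDiff_iter m).eq_zero_of_eventually_zero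
      hdiff_eventually_zero
  exact exists_polynomial_of_fwdDiff_iter_eq_zero hdiff_zero
end
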